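/- arXiv:1705.02606 — 3 statements merged into one kernel-verified Lean document; each statement's English description precedes it below -/
import Mathlib

section
/- Let K be a field, y ∈ K, and T an indeterminate over K. The Galois group of the splitting field of P_y(T,X) = X^3 + (T - y)X + (T - y) over K(T) is isomorphic to the symmetric group S_3. -/
open Polynomial IntermediateField Module

section Aux

-- Core arithmetic lemma: no coprime (g,h) satisfy this.
theorem aux_no_sol {K : Type*} [Field K] (g h : K[X]) (hcop : IsCoprime g h)
    (heq : (X+1)*g^2 + (X^2+X)*g*h + X^2*h^2 = 0) : False := by
  have pX : Prime (X : K[X]) := Polynomial.prime_X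
  have pX1 : Prime (X + 1 : K[X]) := by
    have h1 : (X + 1 : K[X]) = X - C (-1) := by simp
    rw [h1]; exact Polynomial.prime_X_sub_C _
  have hX1ne : (X + 1 : K[X]) ≠ 0 := pX1.ne_zero
  have hXnd : ¬ (X : K[X]) ∣ (X + 1) := by
    intro hd
    exact Polynomial.not_isUnit_X (R := K) (isUnit_of_dvd_one ((dvd_add_right dvd_rfl).mp hd))
  have hdvd_g : (X : K[X]) ∣ g := by
    have hdd : (X : K[X]) ∣ (X+1) * g^2 :=
      ⟨-((X+1)*g*h + X*h^2), by linear_combination heq⟩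
    exact pX.dvd_of_dvd_pow ((pX.dvd_or_dvd hdd).resolve_left hXnd)
  obtain ⟨g1, rfl⟩ := hdvd_g
  have hE1 : (X+1)*g1^2 + (X+1)*g1*h + h^2 = 0 := by
    have hX2 : ((X : K[X])^2) ≠ 0 := pow_ne_zero _ Polynomial.X_ne_zero
    apply mul_left_cancel₀ hX2
    rw [mul_zero]
    linear_combination heq
  have hdvd_h : (X + 1 : K[X]) ∣ h := by
    have hdd : (X + 1 : K[X]) ∣ h^2 := ⟨-(g1^2 + g1*h), by linear_combination hE1⟩
    exact pX1.dvd_of_dvd_pow hdd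
  obtain ⟨h1, rfl⟩ := hdvd_h
  have hE2 : g1^2 + (X+1)*g1*h1 + (X+1)*h1^2 = 0 := by
    apply mul_left_cancel₀ hX1ne
    rw [mul_zero]
    linear_combination hE1
  have hdvd_g1 : (X + 1 : K[X]) ∣ g1 := by
    have hdd : (X + 1 : K[X]) ∣ g1^2 := ⟨-(g1*h1 + h1^2), by linear_combination hE2⟩
    exact pX1.dvd_of_dvd_pow hdd
  exact pX1.not_unit (hcop.isUnit_of_dvd' (Dvd.dvd.mul_left hdvd_g1 X) (dvd_mul_right _ _))

-- No rational function solves the quadratic.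
theorem aux_no_root {K : Type*} [Field K] (r : RatFunc K) :
    (RatFunc.X+1)*r^2 + (RatFunc.X^2+RatFunc.X)*r + RatFunc.X^2 ≠ 0 := by
  intro heq
  have hinj : Function.Injective (algebraMap K[X] (RatFunc K)) :=
    IsFractionRing.injective _ _
  have hd0 : algebraMap K[X] (RatFunc K) r.denom ≠ 0 := by
    rw [Ne, map_eq_zero_iff _ hinj]
    exact r.denom_ne_zero
  have hg : algebraMap K[X] (RatFunc K) r.num = r * algebraMap K[X] (RatFunc K) r.denom := by
    have h := RatFunc.num_div_denom r
    rw [div_eq_iff hd0] at h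
    exact h
  apply aux_no_sol r.num r.denom r.isCoprime_num_denom
  apply hinj
  rw [map_zero]
  simp only [map_add, map_mul, map_pow, map_one, RatFunc.algebraMap_X]
  rw [hg]
  linear_combination (algebraMap K[X] (RatFunc K) r.denom)^2 * heq

variable {K : Type*} [Field K] (y : K)

theorem aux_map_eq :
    (X^3 + C ((X : K[X]) - C y) * X + C ((X : K[X]) - C y)).map (algebraMap K[X] (RatFunc K))
      = X^3 + C (RatFunc.X - RatFunc.C y) * X + C (RatFunc.X - RatFunc.C y) := by
  simp [Polynomial.map_add, Polynomial.map_mul, Polynomial.map_pow, map_sub,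
    RatFunc.algebraMap_X, RatFunc.algebraMap_C]

theorem aux_monic0 : (X^3 + C ((X : K[X]) - C y) * X + C ((X : K[X]) - C y)).Monic := by
  monicity!

theorem aux_deg0 : (X^3 + C ((X : K[X]) - C y) * X + C ((X : K[X]) - C y)).natDegree = 3 := by
  compute_degree!

theorem aux_irr0 : Irreducible (X^3 + C ((X : K[X]) - C y) * X + C ((X : K[X]) - C y)) := by
  set p : K[X][X] := X^3 + C ((X : K[X]) - C y) * X + C ((X : K[X]) - C y) with hp
  have hprime : Prime ((X : K[X]) - C y) := Polynomial.prime_X_sub_C y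
  have hP : (Ideal.span {(X : K[X]) - C y}).IsPrime :=
    (Ideal.span_singleton_prime (X_sub_C_ne_zero y)).mpr hprime
  have hEis : p.IsEisensteinAt (Ideal.span {(X : K[X]) - C y}) := by
    constructor
    · rw [(aux_monic0 y).leadingCoeff, Ideal.mem_span_singleton]
      exact fun hd => hprime.not_unit (isUnit_of_dvd_one hd)
    · intro n hn
      rw [aux_deg0 y] at hn
      interval_cases n <;>
        simp [hp, coeff_add, coeff_X_pow, coeff_C_mul, coeff_X, coeff_C,
          Ideal.mem_span_singleton]
    · rw [Ideal.span_singleton_pow, Ideal.mem_span_singleton]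
      intro hd
      have hc0 : p.coeff 0 = (X : K[X]) - C y := by
        simp [hp, coeff_add, coeff_X_pow, coeff_C_mul, coeff_X, coeff_C]
      rw [hc0, pow_two] at hd
      obtain ⟨c, hc⟩ := hd
      have h1 : (1 : K[X]) = ((X : K[X]) - C y) * c := by
        apply mul_left_cancel₀ (X_sub_C_ne_zero y)
        rw [mul_one]
        linear_combination hc
      exact hprime.not_unit (isUnit_of_dvd_one ⟨c, h1⟩)
  exact hEis.irreducible hP (aux_monic0 y).isPrimitive (by rw [aux_deg0 y]; norm_num)

theorem aux_irr : Irreducible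
    (X^3 + C (RatFunc.X - RatFunc.C y) * X + C (RatFunc.X - RatFunc.C y) : (RatFunc K)[X]) := by
  rw [← aux_map_eq y]
  exact ((aux_monic0 y).irreducible_iff_irreducible_map_fraction_map).mp (aux_irr0 y)

theorem aux_t_ne : (RatFunc.X - RatFunc.C y : RatFunc K) ≠ 0 := by
  have h : (RatFunc.X - RatFunc.C y : RatFunc K)
      = algebraMap K[X] (RatFunc K) ((X : K[X]) - C y) := by
    simp [map_sub, RatFunc.algebraMap_X, RatFunc.algebraMap_C]
  rw [h, Ne, map_eq_zero_iff _ (IsFractionRing.injective _ _)]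
  exact X_sub_C_ne_zero y

theorem aux_sep : ((X^3 + C (RatFunc.X - RatFunc.C y) * X + C (RatFunc.X - RatFunc.C y) :
    (RatFunc K)[X])).Separable := by
  rw [separable_iff_derivative_ne_zero (aux_irr y)]
  intro h
  apply aux_t_ne y
  have hc : (derivative (X^3 + C (RatFunc.X - RatFunc.C y) * X + C (RatFunc.X - RatFunc.C y) :
      (RatFunc K)[X])).coeff 0 = RatFunc.X - RatFunc.C y := by
    simp [derivative_add, derivative_X_pow, derivative_C, coeff_add, coeff_C_mul, coeff_X_pow,
      coeff_C]
  rw [h, coeff_zero] at hc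
  exact hc.symm

theorem aux_deg : ((X^3 + C (RatFunc.X - RatFunc.C y) * X + C (RatFunc.X - RatFunc.C y) :
    (RatFunc K)[X])).natDegree = 3 := by
  rw [← aux_map_eq y, (aux_monic0 y).natDegree_map]
  exact aux_deg0 y

theorem aux_monic : ((X^3 + C (RatFunc.X - RatFunc.C y) * X + C (RatFunc.X - RatFunc.C y) :
    (RatFunc K)[X])).Monic := by
  rw [← aux_map_eq y]
  exact (aux_monic0 y).map _

end Aux



/-- Conjugating permutations by an equivalence, as a `MulEquiv`. -/
def permMulEquiv {α β : Type*} (e : α ≃ β) : Equiv.Perm α ≃* Equiv.Perm β :=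
  { Equiv.permCongr e with
    map_mul' := fun σ τ => by
      ext x
      simp [Equiv.permCongr] }

set_option maxHeartbeats 1000000 in
set_option synthInstance.maxHeartbeats 400000 in
/-- The Galois group of (the splitting field of) `P_y(T,X) = X^3 + (T-y)X + (T-y)`
over `K(T)` is isomorphic to `S_3`. -/
theorem cubic_gal_iso_S3 (K : Type*) [Field K] (y : K) :
    Nonempty ((X ^ 3 + C (RatFunc.X - RatFunc.C y) * X + C (RatFunc.X - RatFunc.C y) :
      Polynomial (RatFunc K)).Gal ≃* Equiv.Perm (Fin 3)) := by
  classical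
  set t : RatFunc K := RatFunc.X - RatFunc.C y with ht
  set P : (RatFunc K)[X] := X ^ 3 + C t * X + C t with hPdef
  have hirr : Irreducible P := aux_irr y
  have hsep : P.Separable := aux_sep y
  have hdeg : P.natDegree = 3 := aux_deg y
  have hmonic : P.Monic := aux_monic y
  have hPne : P ≠ 0 := hmonic.ne_zero
  set L := P.SplittingField with hL
  haveI : Fact ((P.map (algebraMap (RatFunc K) L)).Splits) := ⟨SplittingField.splits P⟩
  -- roots
  have hcard3 : Fintype.card (P.rootSet L) = 3 := by
    rw [card_rootSet_eq_natDegree hsep (SplittingField.splits P), hdeg]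
  obtain ⟨a, b, hab⟩ := Fintype.exists_pair_of_one_lt_card (α := P.rootSet L)
    (by rw [hcard3]; norm_num)
  set α : L := a.1 with hα
  set β : L := b.1 with hβ
  have hαβ : α ≠ β := fun h => hab (Subtype.ext h)
  have hαroot : aeval α P = 0 := (Polynomial.mem_rootSet.mp a.2).2
  have hβroot : aeval β P = 0 := (Polynomial.mem_rootSet.mp b.2).2
  set t' : L := algebraMap (RatFunc K) L t with ht'
  have hαeq : α^3 + t'*α + t' = 0 := by
    have h : aeval α ((X : (RatFunc K)[X])^3 + C t * X + C t) = 0 := hαroot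
    simpa [map_add, map_mul, map_pow, aeval_X, aeval_C] using h
  have hβeq : β^3 + t'*β + t' = 0 := by
    have h : aeval β ((X : (RatFunc K)[X])^3 + C t * X + C t) = 0 := hβroot
    simpa [map_add, map_mul, map_pow, aeval_X, aeval_C] using h
  have hα1 : α + 1 ≠ 0 := by
    intro h
    have hα' : α = -1 := by linear_combination h
    rw [hα'] at hαeq
    have hcon : (-1 : L) = 0 := by linear_combination hαeq
    simpa using hcon
  -- transcendence of α over K
  have htrX : Transcendental K (RatFunc.X : RatFunc K) := by
    rw [← RatFunc.algebraMap_X (K := K)]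
    exact (transcendental_algebraMap_iff (IsFractionRing.injective K[X] (RatFunc K))).mpr
      (Polynomial.transcendental_X K)
  have htrt : Transcendental K t := by
    have h4 := htrX.aeval ((X : K[X]) - C y) (by simp)
      (by rw [(monic_X_sub_C y).leadingCoeff]; exact one_mem _)
    have h5 : aeval (RatFunc.X : RatFunc K) ((X : K[X]) - C y) = t := by
      rw [map_sub, aeval_X, aeval_C, ht]
      congr 1
    simpa [h5] using h4
  have htr : Transcendental K α := by
    intro halg
    have ht'eq : t' = -α^3 * (α+1)⁻¹ := by
      rw [eq_comm, mul_inv_eq_iff_eq_mul₀ hα1]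
      linear_combination -hαeq
    have hint : IsIntegral K α := (isAlgebraic_iff_isIntegral).mp halg
    haveI := IntermediateField.adjoin.finiteDimensional hint
    have hmem : t' ∈ K⟮α⟯ := by
      rw [ht'eq]
      exact mul_mem (neg_mem (pow_mem (IntermediateField.mem_adjoin_simple_self K α) 3))
        (inv_mem (add_mem (IntermediateField.mem_adjoin_simple_self K α) (one_mem _)))
    have halg' : IsAlgebraic K t' := by
      have h2 : IsIntegral K (⟨t', hmem⟩ : K⟮α⟯) := IsIntegral.of_finite K _
      exact (h2.map (IntermediateField.val _)).isAlgebraic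
    exact htrt ((isAlgebraic_algebraMap_iff (algebraMap (RatFunc K) L).injective).mp halg')
  -- the embedding K(X) → L sending X to α
  have hinjaev : Function.Injective (Polynomial.aeval α : K[X] →ₐ[K] L) :=
    transcendental_iff_injective.mp htr
  set φ : RatFunc K →ₐ[K] L := IsFractionRing.liftAlgHom (K := RatFunc K) hinjaev with hφ
  have hφa : ∀ p : K[X], φ (algebraMap K[X] (RatFunc K) p) = Polynomial.aeval α p := by
    intro p
    rw [hφ, IsFractionRing.liftAlgHom_apply, IsFractionRing.lift_algebraMap]
    rfl
  have hφX : φ RatFunc.X = α := by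
    rw [← RatFunc.algebraMap_X (K := K), hφa, aeval_X]
  have hφinj : Function.Injective φ := φ.toRingHom.injective
  set s : RatFunc K := -RatFunc.X^3 / (RatFunc.X + 1) with hs
  have hX1F : (RatFunc.X + 1 : RatFunc K) ≠ 0 := by
    have h : (RatFunc.X + 1 : RatFunc K) = algebraMap K[X] (RatFunc K) (X + 1) := by
      rw [map_add, map_one, RatFunc.algebraMap_X]
    rw [h, Ne, map_eq_zero_iff _ (IsFractionRing.injective _ _)]
    intro hcon
    have := Polynomial.X_sub_C_ne_zero (R := K) (-1)
    simp [sub_neg_eq_add] at this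
    exact this hcon
  have hφs : φ s = t' := by
    rw [hs, map_div₀, map_neg, map_pow, map_add, map_one, hφX]
    rw [div_eq_iff hα1]
    linear_combination -hαeq
  have hsXeq : RatFunc.X^3 + s * RatFunc.X + s = 0 := by
    rw [hs]
    field_simp
    ring
  have hs1 : s * (RatFunc.X + 1) = -RatFunc.X^3 := by
    rw [hs]
    field_simp
  -- the range of φ as an intermediate field of L over F
  have halgmem : ∀ f : RatFunc K, algebraMap (RatFunc K) L f ∈ φ.fieldRange := by
    have hx'mem : algebraMap (RatFunc K) L RatFunc.X ∈ φ.fieldRange := by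
      have hXt : (RatFunc.X : RatFunc K) = t + algebraMap K (RatFunc K) y := by
        rw [ht, RatFunc.algebraMap_eq_C]
        ring
      rw [hXt, map_add]
      apply add_mem
      · exact ⟨s, hφs⟩
      · rw [← IsScalarTower.algebraMap_apply K (RatFunc K) L]
        exact φ.fieldRange.algebraMap_mem y
    have hA : ∀ p : K[X], algebraMap (RatFunc K) L (algebraMap K[X] (RatFunc K) p) ∈ φ.fieldRange := by
      intro p
      have hhom : ((algebraMap (RatFunc K) L).comp (algebraMap K[X] (RatFunc K))) =
          ((Polynomial.aeval (R := K) (algebraMap (RatFunc K) L RatFunc.X)) : K[X] →ₐ[K] L).toRingHom := by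
        apply Polynomial.ringHom_ext
        · intro c
          simp only [RingHom.coe_comp, Function.comp_apply, AlgHom.toRingHom_eq_coe,
            RingHom.coe_coe, aeval_C]
          rw [RatFunc.algebraMap_C, ← RatFunc.algebraMap_eq_C (K := K),
            ← IsScalarTower.algebraMap_apply K (RatFunc K) L]
        · simp only [RingHom.coe_comp, Function.comp_apply, AlgHom.toRingHom_eq_coe,
            RingHom.coe_coe, aeval_X, RatFunc.algebraMap_X]
      have hcomp : algebraMap (RatFunc K) L (algebraMap K[X] (RatFunc K) p)
          = Polynomial.aeval (algebraMap (RatFunc K) L RatFunc.X) p := RingHom.congr_fun hhom p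
      rw [hcomp]
      have hsub : Algebra.adjoin K {algebraMap (RatFunc K) L RatFunc.X} ≤ φ.fieldRange.toSubalgebra :=
        Algebra.adjoin_le (Set.singleton_subset_iff.mpr hx'mem)
      exact hsub (Polynomial.aeval_mem_adjoin_singleton K _)
    intro f
    rw [← RatFunc.num_div_denom f, map_div₀]
    exact div_mem (hA _) (hA _)
  set M : IntermediateField (RatFunc K) L := Subfield.toIntermediateField φ.fieldRange.toSubfield halgmem
    with hM
  have hαM : α ∈ M := ⟨RatFunc.X, hφX⟩
  -- finrank facts
  have hintα : IsIntegral (RatFunc K) α := IsAlgebraic.isIntegral ⟨P, hPne, hαroot⟩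
  have h3 : finrank (RatFunc K) (RatFunc K)⟮α⟯ = 3 := by
    have hmin : minpoly (RatFunc K) α = P :=
      (minpoly.eq_of_irreducible_of_monic hirr hαroot hmonic).symm
    rw [IntermediateField.adjoin.finrank hintα, hmin]
    exact hdeg
  haveI : FiniteDimensional (RatFunc K) L := inferInstance
  have hmul : finrank (RatFunc K) (RatFunc K)⟮α⟯ * finrank (RatFunc K)⟮α⟯ L = finrank (RatFunc K) L :=
    Module.finrank_mul_finrank (RatFunc K) (RatFunc K)⟮α⟯ L
  have hcardGal : Fintype.card P.Gal = finrank (RatFunc K) L := by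
    rw [← Nat.card_eq_fintype_card]; exact Gal.card_of_separable hsep
  have hinjG := Gal.galActionHom_injective P L
  have hcardPerm : Fintype.card (Equiv.Perm (P.rootSet L)) = 6 := by
    rw [Fintype.card_perm, hcard3]
    rfl
  have hle : Fintype.card P.Gal ≤ 6 := by
    rw [← hcardPerm]
    exact Fintype.card_le_of_injective _ hinjG
  have hne3 : finrank (RatFunc K) L ≠ 3 := by
    intro hfr
    have htop : (RatFunc K)⟮α⟯ = ⊤ := by
      apply IntermediateField.eq_of_le_of_finrank_le le_top
      rw [h3, IntermediateField.finrank_top', hfr]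
    have hβmem : β ∈ (RatFunc K)⟮α⟯ := by
      rw [htop]
      exact IntermediateField.mem_top
    have hβM : β ∈ M :=
      (IntermediateField.adjoin_le_iff.mpr (Set.singleton_subset_iff.mpr hαM)) hβmem
    obtain ⟨r, hr⟩ : ∃ r : RatFunc K, φ r = β := hβM
    have hre : r^3 + s*r + s = 0 := by
      apply hφinj
      rw [map_zero, map_add, map_add, map_pow, map_mul, hr, hφs]
      linear_combination hβeq
    have hrX : r ≠ RatFunc.X := by
      intro h
      rw [h, hφX] at hr
      exact hαβ hr
    have hfac : (r - RatFunc.X) * (r^2 + r*RatFunc.X + RatFunc.X^2 + s) = 0 := by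
      linear_combination hre - hsXeq
    have h2 : r^2 + r*RatFunc.X + RatFunc.X^2 + s = 0 :=
      (mul_eq_zero.mp hfac).resolve_left (sub_ne_zero.mpr hrX)
    exact aux_no_root r (by linear_combination (RatFunc.X+1)*h2 - hs1)
  have hdvd : 3 ∣ finrank (RatFunc K) L := ⟨finrank (RatFunc K)⟮α⟯ L, by rw [← h3]; exact hmul.symm⟩
  have hpos : 0 < finrank (RatFunc K) L := Module.finrank_pos
  have h6 : Fintype.card P.Gal = 6 := by
    rw [hcardGal]
    obtain ⟨k, hk⟩ := hdvd
    rw [hcardGal] at hle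
    omega
  have hbij : Function.Bijective (Gal.galActionHom P L) :=
    (Fintype.bijective_iff_injective_and_card _).mpr ⟨hinjG, by rw [h6, hcardPerm]⟩
  exact ⟨(MulEquiv.ofBijective _ hbij).trans (permMulEquiv (Fintype.equivFinOfCardEq hcard3))⟩
end

section
/- Let K be a field, T an indeterminate over K, and y1 ≠ y2 elements of K. If x1 is a root of X^3 + (T - y1)X + (T - y1) and x2 is a root of X^3 + (T - y2)X + (T - y2) in a fixed algebraic closure of K(T), then the fields K(T)(x1) and K(T)(x2) are distinct. -/
open Polynomial IntermediateField

/-- If `y₁ ≠ y₂` in `K` and `xᵢ` is a root of `X^3 + (T - yᵢ)X + (T - yᵢ)` in an algebraic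
closure of `K(T)`, then the fields `K(T)(x₁)` and `K(T)(x₂)` are distinct. -/
theorem fields_distinct (K : Type*) [Field K] (y₁ y₂ : K) (hy : y₁ ≠ y₂)
    (x₁ x₂ : AlgebraicClosure (RatFunc K))
    (h₁ : aeval x₁ (X ^ 3 + C (RatFunc.X - RatFunc.C y₁) * X + C (RatFunc.X - RatFunc.C y₁) :
      Polynomial (RatFunc K)) = 0)
    (h₂ : aeval x₂ (X ^ 3 + C (RatFunc.X - RatFunc.C y₂) * X + C (RatFunc.X - RatFunc.C y₂) :
      Polynomial (RatFunc K)) = 0) :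
    adjoin (RatFunc K) {x₁} ≠ adjoin (RatFunc K) {x₂} := by
  intro heq
  simp only [map_add, map_mul, map_pow, aeval_X, aeval_C, map_sub] at h₁ h₂
  set j := algebraMap (RatFunc K) (AlgebraicClosure (RatFunc K)) with hj
  set T : AlgebraicClosure (RatFunc K) := j RatFunc.X with hT
  -- x₁ + 1 ≠ 0
  have hx1ne : x₁ + 1 ≠ 0 := by
    intro h
    have hx : x₁ = -1 := by linear_combination h
    rw [hx] at h₁
    have : (-1 : AlgebraicClosure (RatFunc K)) = 0 := by linear_combination h₁
    simpa using this
  -- x₁ is transcendental over K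
  have htr : Transcendental K x₁ := by
    intro halg
    have h1 : IsAlgebraic K (x₁ + 1) :=
      (halg.isIntegral.add isIntegral_one).isAlgebraic
    have h2 : IsAlgebraic K ((x₁ + 1)⁻¹) := h1.inv
    have hTalg : IsAlgebraic K T := by
      have hTrel : T = j (RatFunc.C y₁) - x₁ ^ 3 * (x₁ + 1)⁻¹ := by
        field_simp
        linear_combination h₁
      have hyalg : IsAlgebraic K (j (RatFunc.C y₁)) := by
        rw [← RatFunc.algebraMap_eq_C, hj, ← IsScalarTower.algebraMap_apply]
        exact isAlgebraic_algebraMap y₁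
      rw [hTrel]
      exact (hyalg.isIntegral.sub ((halg.isIntegral.pow 3).mul h2.isIntegral)).isAlgebraic
    have hXalg : IsAlgebraic K (RatFunc.X : RatFunc K) :=
      (isAlgebraic_algebraMap_iff (algebraMap (RatFunc K)
        (AlgebraicClosure (RatFunc K))).injective).mp hTalg
    have hXtr : Transcendental K (RatFunc.X : RatFunc K) := by
      have := (transcendental_algebraMap_iff (R := K) (A := RatFunc K)
        (RatFunc.algebraMap_injective K)).mpr (Polynomial.transcendental_X K)
      rwa [RatFunc.algebraMap_X] at this
    exact hXtr hXalg
  have hinj : Function.Injective (Polynomial.aeval x₁ : K[X] →ₐ[K] AlgebraicClosure (RatFunc K)) :=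
    transcendental_iff_injective.mp htr
  have hcond : nonZeroDivisors K[X] ≤ (nonZeroDivisors (AlgebraicClosure (RatFunc K))).comap
      (Polynomial.aeval x₁ : K[X] →ₐ[K] AlgebraicClosure (RatFunc K)) :=
    nonZeroDivisors_le_comap_nonZeroDivisors_of_injective _ hinj
  set φ : RatFunc K →ₐ[K] AlgebraicClosure (RatFunc K) :=
    RatFunc.liftAlgHom (Polynomial.aeval x₁) hcond with hφdef
  have hφinj : Function.Injective φ := RatFunc.liftAlgHom_injective _ hinj
  have hφp : ∀ pp : K[X], φ (algebraMap K[X] (RatFunc K) pp) = Polynomial.aeval x₁ pp := by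
    intro pp
    have h := RatFunc.liftAlgHom_apply_div' (Polynomial.aeval x₁) hcond pp 1
    simpa using h
  have hφX : φ RatFunc.X = x₁ := by
    have := hφp Polynomial.X
    rwa [RatFunc.algebraMap_X, Polynomial.aeval_X] at this
  have hφC : ∀ a : K, φ (RatFunc.C a) = j (RatFunc.C a) := by
    intro a
    rw [← RatFunc.algebraMap_eq_C, φ.commutes, hj, ← IsScalarTower.algebraMap_apply]
  -- j of a polynomial in RatFunc.X equals aeval T
  have hjp : ∀ pp : K[X], j (algebraMap K[X] (RatFunc K) pp) = Polynomial.aeval T pp := by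
    have : ((IsScalarTower.toAlgHom K (RatFunc K) (AlgebraicClosure (RatFunc K))).comp
        (IsScalarTower.toAlgHom K K[X] (RatFunc K))) = Polynomial.aeval T := by
      apply Polynomial.algHom_ext
      simp [RatFunc.algebraMap_X, hT, hj]
    intro pp
    have h2 := congrFun (congrArg (fun f => f.toFun) this) pp
    simpa using h2
  -- T is in the range of φ
  have hTrel : T = j (RatFunc.C y₁) - x₁ ^ 3 / (x₁ + 1) := by
    field_simp
    linear_combination h₁
  have hTmem : T ∈ φ.fieldRange := by
    refine ⟨RatFunc.C y₁ - RatFunc.X ^ 3 / (RatFunc.X + 1), ?_⟩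
    rw [hTrel]
    simp [map_sub, map_div₀, hφX, hφC]
  -- every element of RatFunc K maps into the range of φ
  have hmem : ∀ r : RatFunc K, j r ∈ φ.fieldRange := by
    intro r
    have haev : ∀ pp : K[X], Polynomial.aeval T pp ∈ φ.fieldRange := by
      intro pp
      have hcoe := Subalgebra.aeval_coe (R := K) φ.fieldRange.toSubalgebra
        ⟨T, hTmem⟩ pp
      have h2 : Polynomial.aeval T pp ∈ φ.fieldRange.toSubalgebra := by
        rw [show (Polynomial.aeval T) pp = _ from hcoe]
        exact SetLike.coe_mem _
      rwa [IntermediateField.mem_toSubalgebra] at h2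
    have : j r = Polynomial.aeval T r.num / Polynomial.aeval T r.denom := by
      conv_lhs => rw [← RatFunc.num_div_denom r]
      rw [map_div₀, hjp, hjp]
    rw [this]
    exact div_mem (haev _) (haev _)
  -- the intermediate field over RatFunc K given by the range of φ
  set E : IntermediateField (RatFunc K) (AlgebraicClosure (RatFunc K)) :=
    Subfield.toIntermediateField φ.fieldRange.toSubfield hmem with hE
  have hx2mem : x₂ ∈ E := by
    have h0 : x₂ ∈ adjoin (RatFunc K) {x₂} := subset_adjoin _ _ rfl
    rw [← heq] at h0
    have hle : adjoin (RatFunc K) {x₁} ≤ E := by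
      rw [adjoin_le_iff]
      rintro z rfl
      exact ⟨RatFunc.X, hφX⟩
    exact hle h0
  obtain ⟨s, hs⟩ : ∃ s : RatFunc K, φ s = x₂ := hx2mem
  -- the equation satisfied by s in RatFunc K, denominators cleared
  have hs_eq : s ^ 3 * (RatFunc.X + 1) +
      ((RatFunc.C y₁ - RatFunc.C y₂) * (RatFunc.X + 1) - RatFunc.X ^ 3) * (s + 1) = 0 := by
    apply hφinj
    rw [map_zero]
    simp only [map_add, map_mul, map_sub, map_pow, map_one, hφX, hφC, hs]
    linear_combination (x₁ + 1) * h₂ - (x₂ + 1) * h₁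
  -- clear the denominator of s : get a polynomial identity
  set p : K[X] := s.num with hpdef
  set q : K[X] := s.denom with hqdef
  have hq0 : algebraMap K[X] (RatFunc K) q ≠ 0 :=
    RatFunc.algebraMap_ne_zero (RatFunc.denom_ne_zero s)
  have hps : algebraMap K[X] (RatFunc K) p = s * algebraMap K[X] (RatFunc K) q :=
    (div_eq_iff hq0).mp (RatFunc.num_div_denom s)
  have hX1poly : (Polynomial.X + 1 : K[X]) ≠ 0 := by
    intro h
    have := congrArg (fun f => Polynomial.coeff f 1) h
    simp [Polynomial.coeff_one] at this
  have key0 : p ^ 3 * (Polynomial.X + 1) +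
      (Polynomial.C (y₁ - y₂) * (Polynomial.X + 1) - Polynomial.X ^ 3) * (p + q) * q ^ 2
      = 0 := by
    apply RatFunc.algebraMap_injective K
    rw [map_zero]
    simp only [map_add, map_mul, map_sub, map_pow, map_one, hps,
      RatFunc.algebraMap_X, RatFunc.algebraMap_C]
    linear_combination (algebraMap K[X] (RatFunc K) q) ^ 3 * hs_eq
  -- q squared divides X + 1, hence q = 1
  have hq1 : q = 1 := by
    have hdvd : q ^ 2 ∣ (Polynomial.X + 1 : K[X]) := by
      have hcop : IsCoprime (q ^ 2) (p ^ 3) :=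
        ((RatFunc.isCoprime_num_denom s).symm.pow)
      refine hcop.dvd_of_dvd_mul_left ?_
      refine ⟨-((Polynomial.C (y₁ - y₂) * (Polynomial.X + 1) - Polynomial.X ^ 3) * (p + q)), ?_⟩
      linear_combination key0
    have hdeg : (q ^ 2).natDegree ≤ 1 := by
      have := Polynomial.natDegree_le_of_dvd hdvd hX1poly
      calc (q ^ 2).natDegree ≤ (Polynomial.X + 1 : K[X]).natDegree := this
        _ ≤ 1 := by
          rw [show (Polynomial.X + 1 : K[X]) = Polynomial.X + Polynomial.C 1 by simp]
          exact (Polynomial.natDegree_X_add_C 1).le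
    rw [Polynomial.natDegree_pow] at hdeg
    have hq00 : q.natDegree = 0 := by omega
    exact (RatFunc.monic_denom s).natDegree_eq_zero.mp hq00
  rw [hq1] at key0
  have key1 : p ^ 3 * (Polynomial.X + 1) +
      (Polynomial.C (y₁ - y₂) * (Polynomial.X + 1) - Polynomial.X ^ 3) * (p + 1) = 0 := by
    linear_combination key0
  -- p + 1 is nonzero and divides X + 1, so p has degree at most 1
  have hp1ne : p + 1 ≠ 0 := by
    intro h
    have hp : p = -1 := by linear_combination h
    rw [hp] at key1
    apply hX1poly
    have : -(Polynomial.X + 1 : K[X]) = 0 := by linear_combination key1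
    linear_combination -this
  have hpdvd : (p + 1) ∣ (Polynomial.X + 1 : K[X]) := by
    have hcop : IsCoprime (p + 1) (p ^ 3) := by
      refine IsCoprime.pow_right ?_
      exact ⟨1, -1, by ring⟩
    refine hcop.dvd_of_dvd_mul_left ?_
    refine ⟨-(Polynomial.C (y₁ - y₂) * (Polynomial.X + 1) - Polynomial.X ^ 3), ?_⟩
    linear_combination key1
  have hpdeg : p.natDegree ≤ 1 := by
    have h1 : (p + 1).natDegree ≤ 1 := by
      have := Polynomial.natDegree_le_of_dvd hpdvd hX1poly
      calc (p + 1).natDegree ≤ (Polynomial.X + 1 : K[X]).natDegree := this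
        _ ≤ 1 := by
          rw [show (Polynomial.X + 1 : K[X]) = Polynomial.X + Polynomial.C 1 by simp]
          exact (Polynomial.natDegree_X_add_C 1).le
    calc p.natDegree = ((p + 1) + (-1) : K[X]).natDegree := by ring_nf
      _ ≤ max (p + 1).natDegree (-1 : K[X]).natDegree := Polynomial.natDegree_add_le _ _
      _ ≤ 1 := by
        simp only [Polynomial.natDegree_neg, Polynomial.natDegree_one]
        omega
  -- write p = d X + e and extract coefficient identities
  set d : K := p.coeff 1 with hd
  set e : K := p.coeff 0 with he
  have hp : p = Polynomial.C d * Polynomial.X + Polynomial.C e :=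
    Polynomial.eq_X_add_C_of_natDegree_le_one hpdeg
  rw [hp] at key1
  set c : K := y₁ - y₂ with hcdef
  have hc : c ≠ 0 := sub_ne_zero.mpr hy
  have key : Polynomial.C (d ^ 3 - d) * Polynomial.X ^ 4
      + Polynomial.C (d ^ 3 + 3 * d ^ 2 * e - e - 1) * Polynomial.X ^ 3
      + Polynomial.C (3 * d ^ 2 * e + 3 * d * e ^ 2 + c * d) * Polynomial.X ^ 2
      + Polynomial.C (3 * d * e ^ 2 + e ^ 3 + c * e + c + c * d) * Polynomial.X ^ 1
      + Polynomial.C (e ^ 3 + c * e + c) * Polynomial.X ^ 0 = 0 := by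
    simp only [map_sub, map_add, map_mul, map_pow, map_one, map_ofNat]
    linear_combination key1
  have hcoeff : ∀ n : ℕ, (Polynomial.C (d ^ 3 - d) * Polynomial.X ^ 4
      + Polynomial.C (d ^ 3 + 3 * d ^ 2 * e - e - 1) * Polynomial.X ^ 3
      + Polynomial.C (3 * d ^ 2 * e + 3 * d * e ^ 2 + c * d) * Polynomial.X ^ 2
      + Polynomial.C (3 * d * e ^ 2 + e ^ 3 + c * e + c + c * d) * Polynomial.X ^ 1
      + Polynomial.C (e ^ 3 + c * e + c) * Polynomial.X ^ 0 : K[X]).coeff n = 0 := by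
    intro n
    rw [key]
    simp
  have h4 : d ^ 3 - d = 0 := by
    have := hcoeff 4
    simp only [Polynomial.coeff_add, Polynomial.coeff_C_mul, Polynomial.coeff_X_pow] at this
    simpa using this
  have h3 : d ^ 3 + 3 * d ^ 2 * e - e - 1 = 0 := by
    have := hcoeff 3
    simp only [Polynomial.coeff_add, Polynomial.coeff_C_mul, Polynomial.coeff_X_pow] at this
    simpa using this
  have h2c : 3 * d ^ 2 * e + 3 * d * e ^ 2 + c * d = 0 := by
    have := hcoeff 2
    simp only [Polynomial.coeff_add, Polynomial.coeff_C_mul, Polynomial.coeff_X_pow] at this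
    simpa using this
  have h1c : 3 * d * e ^ 2 + e ^ 3 + c * e + c + c * d = 0 := by
    have := hcoeff 1
    simp only [Polynomial.coeff_add, Polynomial.coeff_C_mul, Polynomial.coeff_X_pow] at this
    simpa using this
  have h0c : e ^ 3 + c * e + c = 0 := by
    have := hcoeff 0
    simp only [Polynomial.coeff_add, Polynomial.coeff_C_mul, Polynomial.coeff_X_pow] at this
    simpa using this
  -- scalar endgame
  have h10 : 3 * d * e ^ 2 + c * d = 0 := by linear_combination h1c - h0c
  have h20 : 3 * d ^ 2 * e = 0 := by linear_combination h2c - h10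
  by_cases hdz : d = 0
  · rw [hdz] at h3
    have he1 : e = -1 := by linear_combination -h3
    rw [he1] at h0c
    have : (1 : K) = 0 := by linear_combination -h0c
    exact one_ne_zero this
  · have hd2 : d ^ 2 = 1 := by
      have : d * (d ^ 2 - 1) = 0 := by linear_combination h4
      rcases mul_eq_zero.mp this with h | h
      · exact absurd h hdz
      · linear_combination h
    have h3e : (3 : K) * e = 0 := by
      calc (3 : K) * e = 3 * d ^ 2 * e := by rw [hd2]; ring
        _ = 0 := h20
    have hcd : c * d = 0 := by linear_combination h10 - d * e * h3e
    rcases mul_eq_zero.mp hcd with h | h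
    · exact hc h
    · exact hdz h
end

section
/- Let K be a field and x1 transcendental over K. Let δ be a nonzero element of K and set F(X) = (x1 + 1)X^3 − ((x1 + 1)δ + x1^3)(X + 1) ∈ K(x1)[X]. Then F(X) is irreducible over K(x1). -/
open Polynomial

lemma pow_two_dvd_deriv {L : Type*} [CommRing L] {μ : L} {a : L[X]} (h : (X - C μ)^2 ∣ a) :
    (derivative a).eval μ = 0 := by
  obtain ⟨q, rfl⟩ := h
  simp [derivative_mul, derivative_pow]

lemma exists_simple_root {L : Type*} [Field L] [IsAlgClosed L] {d : L} (hd : d ≠ 0) :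
    ∃ μ : L, μ ^ 3 + d * μ + d = 0 ∧ 3 * μ ^ 2 + d ≠ 0 := by
  by_contra hcon
  push_neg at hcon
  set G : L[X] := X ^ 3 + C d * X + C d with hG
  have hGm : G.Monic := by
    unfold G
    monicity!
  have hdeg : G.natDegree = 3 := by unfold G; compute_degree!
  have hG0 : G ≠ 0 := hGm.ne_zero
  have hcard : Multiset.card G.roots = 3 := by
    rw [← hdeg]
    exact (splits_iff_card_roots.mp (IsAlgClosed.splits G))
  have hderiv : derivative G = C 3 * X ^ 2 + C d := by
    unfold G
    simp [derivative_pow]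
  -- every root gives (X - C a)^2 ∣ G
  have hmult : ∀ a ∈ G.roots, (X - C a) ^ 2 ∣ G := by
    intro a ha
    have haroot : G.eval a = 0 := (mem_roots hG0).mp ha
    have haroot' : a ^ 3 + d * a + d = 0 := by
      simpa [hG] using haroot
    have hder : (derivative G).eval a = 0 := by
      rw [hderiv]; simpa using hcon a haroot'
    obtain ⟨q, hq⟩ := (dvd_iff_isRoot.mpr haroot)
    have hqa : q.eval a = 0 := by
      have h2 := congrArg (fun p => (derivative p).eval a) hq
      simp only [derivative_mul, derivative_sub, derivative_X, derivative_C, sub_zero,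
        eval_add, eval_mul, eval_sub, eval_X, eval_C, sub_self, one_mul, zero_mul,
        mul_zero, zero_add, add_zero, hder] at h2
      exact h2.symm
    obtain ⟨r, hr⟩ := dvd_iff_isRoot.mpr hqa
    exact ⟨r, by rw [hq, hr]; ring⟩
  -- all roots equal
  obtain ⟨a, ha⟩ := Multiset.card_pos_iff_exists_mem.mp (by rw [hcard]; norm_num)
  have hall : ∀ b ∈ G.roots, b = a := by
    intro b hb
    by_contra hne
    have hcop : IsCoprime (X - C b) (X - C a) :=
      isCoprime_X_sub_C_of_isUnit_sub ((sub_ne_zero.mpr hne).isUnit)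
    have hdvd : (X - C b) ^ 2 * (X - C a) ^ 2 ∣ G :=
      (hcop.pow).mul_dvd (hmult b hb) (hmult a ha)
    have := natDegree_le_of_dvd hdvd hG0
    rw [hdeg] at this
    simp [natDegree_mul, natDegree_pow, natDegree_X_sub_C, X_sub_C_ne_zero] at this
  have hrep : G.roots = Multiset.replicate 3 a :=
    Multiset.eq_replicate.mpr ⟨hcard, hall⟩
  have hGeq : G = (X - C a) ^ 3 := by
    have := prod_multiset_X_sub_C_of_monic_of_roots_card_eq hGm (by rw [hcard, hdeg])
    rw [hrep, Multiset.map_replicate, Multiset.prod_replicate] at this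
    exact this.symm
  have e : (X - C a)^3 = X^3 + C (-(3*a)) * X^2 + C (3*a^2) * X + C (-(a^3)) := by
    simp only [map_neg, map_mul, map_pow, map_ofNat]
    ring
  rw [hG, e] at hGeq
  have h2 := congrArg (fun p => coeff p 2) hGeq
  have h1 := congrArg (fun p => coeff p 1) hGeq
  simp only [coeff_add, coeff_C_mul, coeff_X_pow, coeff_C, coeff_X] at h2 h1
  norm_num at h2 h1
  -- h2 : 0 = -(3*a) perhaps; h1 : d = 3*a^2
  apply hd
  rcases h2 with h3 | ha0
  · rw [h1, h3, zero_mul]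
  · rw [h1, ha0]; ring

lemma Fprime_irred {L : Type*} [Field L] {d : L} (hd : d ≠ 0) {μ : L}
    (h1 : μ ^ 3 + d * μ + d = 0) (h2 : 3 * μ ^ 2 + d ≠ 0) :
    Irreducible (Polynomial.map (algebraMap (Polynomial L) (RatFunc L))
      (C (Polynomial.X + 1) * X ^ 3 -
        C ((Polynomial.X + 1) * Polynomial.C d + Polynomial.X ^ 3) * (X + 1) :
        Polynomial (Polynomial L))) := by
  letI := Classical.decEq L
  letI : NormalizedGCDMonoid (Polynomial L) := UniqueFactorizationMonoid.toNormalizedGCDMonoid _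
  set a : L[X] := (Polynomial.X + 1) * Polynomial.C d + Polynomial.X ^ 3 with ha
  set F' : Polynomial (Polynomial L) := C (Polynomial.X + 1) * X ^ 3 - C a * (X + 1) with hF'
  have hXne : (Polynomial.X + 1 : L[X]) ≠ 0 := by
    simpa using X_add_C_ne_zero (1 : L)
  have hc0 : F'.coeff 0 = -a := by
    simp [hF', mul_add, coeff_sub, coeff_add, coeff_C_mul, coeff_X_pow, add_mul]
  have hc1 : F'.coeff 1 = -a := by
    simp [hF', mul_add, coeff_sub, coeff_add, coeff_C_mul, coeff_X_pow, add_mul]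
  have hc2 : F'.coeff 2 = 0 := by
    simp [hF', mul_add, coeff_sub, coeff_add, coeff_C_mul, coeff_X_pow, add_mul]
  have hc3 : F'.coeff 3 = Polynomial.X + 1 := by
    simp [hF', mul_add, coeff_sub, coeff_add, coeff_C_mul, coeff_X_pow, add_mul]
  have hdeg : F'.natDegree = 3 := by
    rw [hF']
    compute_degree!
  have hevala : Polynomial.eval μ a = 0 := by
    rw [ha]; simp; linear_combination h1
  have hdvda : (Polynomial.X - Polynomial.C μ) ∣ a := dvd_iff_isRoot.mpr hevala
  have hprime : (Ideal.span {Polynomial.X - Polynomial.C μ} : Ideal L[X]).IsPrime :=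
    (Ideal.span_singleton_prime (X_sub_C_ne_zero μ)).mpr (prime_X_sub_C μ)
  have hEis : F'.IsEisensteinAt (Ideal.span {Polynomial.X - Polynomial.C μ}) := by
    constructor
    · rw [leadingCoeff, hdeg, hc3, Ideal.mem_span_singleton]
      intro hdvd
      have hμ : μ + 1 = 0 := by
        have := dvd_iff_isRoot.mp hdvd
        simpa using this
      have hμ' : μ = -1 := by linear_combination hμ
      rw [hμ'] at h1
      norm_num at h1
    · intro n hn
      rw [hdeg] at hn
      interval_cases n
      · rw [hc0, Ideal.mem_span_singleton]
        exact hdvda.neg_right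
      · rw [hc1, Ideal.mem_span_singleton]
        exact hdvda.neg_right
      · rw [hc2]; exact Ideal.zero_mem _
    · rw [hc0, Ideal.span_singleton_pow, Ideal.mem_span_singleton]
      intro hdvd
      have := pow_two_dvd_deriv hdvd
      rw [ha] at this
      simp [derivative_mul] at this
      apply h2
      linear_combination -this
  have hprim : F'.IsPrimitive := by
    intro r hr
    have hr3 := (C_dvd_iff_dvd_coeff r F').mp hr 3
    have hr0 := (C_dvd_iff_dvd_coeff r F').mp hr 0
    rw [hc3] at hr3
    rw [hc0] at hr0
    have hra : r ∣ a := (dvd_neg.mp hr0)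
    have hrx3 : r ∣ Polynomial.X ^ 3 := by
      have : r ∣ (Polynomial.X + 1) * Polynomial.C d := hr3.mul_right _
      have h := hra.sub this
      simpa [ha] using h
    have hcop : IsCoprime (Polynomial.X + 1 : L[X]) (Polynomial.X ^ 3) :=
      IsCoprime.pow_right ⟨1, -1, by ring⟩
    exact hcop.isUnit_of_dvd' hr3 hrx3
  have hirr : Irreducible F' := hEis.irreducible hprime hprim (by rw [hdeg]; norm_num)
  exact (hprim.irreducible_iff_irreducible_map_fraction_map).mp hirr

lemma irred_of_map_field {F1 F2 : Type*} [Field F1] [Field F2] (f : F1 →+* F2) {p : F1[X]}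
    (h : Irreducible (p.map f)) : Irreducible p := by
  refine ⟨fun hu => h.not_isUnit (hu.map (mapRingHom f)), fun a b hab => ?_⟩
  have hor := h.isUnit_or_isUnit (show p.map f = a.map f * b.map f by
    rw [hab, Polynomial.map_mul])
  refine hor.imp ?_ ?_ <;> intro hu <;>
    [skip; skip] <;>
    · rw [isUnit_iff_degree_eq_zero, degree_map] at hu
      exact isUnit_iff_degree_eq_zero.mpr hu

/-- With `x₁` transcendental over `K` (modelled by the rational function field `K(x₁)`)
and `δ ∈ K` nonzero, the polynomial
`F(X) = (x₁+1)X^3 − ((x₁+1)δ + x₁^3)(X+1)` is irreducible over `K(x₁)`. -/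
theorem F_irreducible (K : Type*) [Field K] (δ : K) (hδ : δ ≠ 0) :
    Irreducible (C (RatFunc.X + 1) * X ^ 3 -
      C ((RatFunc.X + 1) * RatFunc.C δ + RatFunc.X ^ 3) * (X + 1) :
      Polynomial (RatFunc K)) := by
  set L := AlgebraicClosure K
  set d : L := algebraMap K L δ with hdd
  have hd : d ≠ 0 := by
    simpa [hdd] using (map_ne_zero_iff (algebraMap K L) (algebraMap K L).injective).mpr hδ
  obtain ⟨μ, h1, h2⟩ := exists_simple_root hd
  have hirr := Fprime_irred hd h1 h2
  set g : K[X] →+* RatFunc L :=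
    (algebraMap (Polynomial L) (RatFunc L)).comp (Polynomial.mapRingHom (algebraMap K L)) with hg
  have hginj : Function.Injective g :=
    (IsFractionRing.injective (Polynomial L) (RatFunc L)).comp
      (Polynomial.map_injective _ (algebraMap K L).injective)
  set φ : RatFunc K →+* RatFunc L := IsFractionRing.lift hginj with hφ
  have hφX : φ RatFunc.X = RatFunc.X := by
    rw [← RatFunc.algebraMap_X (K := K), hφ, IsFractionRing.lift_algebraMap, hg]
    simp [RatFunc.algebraMap_X]
  have hφC : φ (RatFunc.C δ) = RatFunc.C d := by
    rw [← RatFunc.algebraMap_C (K := K), hφ, IsFractionRing.lift_algebraMap, hg]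
    simp [RatFunc.algebraMap_C, hdd]
  apply irred_of_map_field φ
  have hmapeq : Polynomial.map φ (C (RatFunc.X + 1) * X ^ 3 -
      C ((RatFunc.X + 1) * RatFunc.C δ + RatFunc.X ^ 3) * (X + 1)) =
      Polynomial.map (algebraMap (Polynomial L) (RatFunc L))
        (C (Polynomial.X + 1) * X ^ 3 -
          C ((Polynomial.X + 1) * Polynomial.C d + Polynomial.X ^ 3) * (X + 1) :
          Polynomial (Polynomial L)) := by
    simp [Polynomial.map_mul, Polynomial.map_sub, Polynomial.map_add, Polynomial.map_pow,
      Polynomial.map_C, Polynomial.map_X, map_add, map_mul, map_pow, map_one,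
      hφX, hφC, RatFunc.algebraMap_X, RatFunc.algebraMap_C]
  rw [hmapeq]
  exact hirr
end
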